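/- arXiv:2012.04364 — 2 statements merged into one kernel-verified Lean document; each statement's English description precedes it below -/
import Mathlib

section
/- Suppose the asset payoffs Y = (Y₀, Y₁, …, Yₙ) are square-integrable and non-redundant with Y₀ = e^r a.s. for a constant r ≥ 0 and time-0 prices y = (1, y₁, …, yₙ), let α ∈ (0,1), i ∈ (0,1), a ∈ ℝ, and let S be a square-integrable liability. Then the quadratic hedging strategies satisfy θ_{S+a} = θ_S + (a·e^{−r}, 0, …, 0), the residual of S + a equals the residual of S, and for any common choice of residual quantile-hedging minimizer η the mean-quantile valuation is translation invariant: ρ(S + a) = ρ(S) + e^{−r}·a. -/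
open MeasureTheory

/-- The normalised Koenker–Bassett loss at level `α`:
`ℓ_α(x) = (α/(1−α))·max(x,0) + max(−x,0)`. -/
noncomputable def KBLoss (α x : ℝ) : ℝ :=
  α / (1 - α) * max x 0 + max (-x) 0

/-!
Adding `a·e^{−r}` units of the riskless asset to a hedge of `S` shifts its payoff by exactly `a`,
so it maps the squared hedging errors of `S` bijectively onto those of `S + a`; hence
`θ_S + (a·e^{−r}, 0, …, 0)` is a quadratic hedge of `S + a`. The quadratic hedge is unique: by
the parallelogram law, two minimizers have a midpoint whose error is smaller by a quarter of the
mean square of their payoff difference, which therefore vanishes, and non-redundancy turns this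
into equality of the strategies. The quantile part of the valuation cancels, being priced with
the same `η` on both sides.
-/

section QuadraticHedge

variable {Ω ι : Type*} [MeasurableSpace Ω] [Fintype ι] {μ : Measure Ω}

def IsQuadraticHedge (μ : Measure Ω) (X : Ω → ℝ) (Y : ι → Ω → ℝ) (θ : ι → ℝ) : Prop :=
  ∀ β : ι → ℝ, ∫ ω, (X ω - ∑ i, θ i * Y i ω) ^ 2 ∂μ ≤ ∫ ω, (X ω - ∑ i, β i * Y i ω) ^ 2 ∂μ

theorem integral_sq_add_integral_sq {f g : Ω → ℝ} (hf : MemLp f 2 μ) (hg : MemLp g 2 μ) :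
    ∫ ω, f ω ^ 2 ∂μ + ∫ ω, g ω ^ 2 ∂μ
      = 2 * ∫ ω, ((f ω + g ω) / 2) ^ 2 ∂μ + (∫ ω, (f ω - g ω) ^ 2 ∂μ) / 2 := by
  have hmid : Integrable (fun ω => 2 * ((f ω + g ω) / 2) ^ 2) μ := by
    have := ((hf.add hg).const_mul (1 / 2 : ℝ)).integrable_sq.const_mul 2
    convert this using 3 with ω
    simp only [Pi.add_apply]
    ring
  have hdiff : Integrable (fun ω => (f ω - g ω) ^ 2 / 2) μ :=
    (hf.sub hg).integrable_sq.div_const 2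
  rw [← integral_add hf.integrable_sq hg.integrable_sq, ← integral_const_mul,
    ← integral_div, ← integral_add hmid hdiff]
  congr 1 with ω
  ring

theorem memLp_sum_mul {Y : ι → Ω → ℝ} (hY : ∀ i, MemLp (Y i) 2 μ) (β : ι → ℝ) :
    MemLp (fun ω => ∑ i, β i * Y i ω) 2 μ :=
  memLp_finsetSum Finset.univ fun i _ => (hY i).const_mul (β i)

theorem IsQuadraticHedge.unique {X : Ω → ℝ} {Y : ι → Ω → ℝ} {θ₁ θ₂ : ι → ℝ}
    (hX : MemLp X 2 μ) (hY : ∀ i, MemLp (Y i) 2 μ)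
    (hNR : ∀ β : ι → ℝ, (∀ᵐ ω ∂μ, ∑ i, β i * Y i ω = 0) → β = 0)
    (h₁ : IsQuadraticHedge μ X Y θ₁) (h₂ : IsQuadraticHedge μ X Y θ₂) : θ₁ = θ₂ := by
  have herr : ∀ θ : ι → ℝ, MemLp (fun ω => X ω - ∑ i, θ i * Y i ω) 2 μ := fun θ =>
    hX.sub (memLp_sum_mul hY θ)
  have hmid : ∀ ω, ((X ω - ∑ i, θ₁ i * Y i ω) + (X ω - ∑ i, θ₂ i * Y i ω)) / 2
      = X ω - ∑ i, ((θ₁ i + θ₂ i) / 2) * Y i ω := fun ω => by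
    simp only [add_div, add_mul, Finset.sum_add_distrib, div_mul_eq_mul_div, ← Finset.sum_div]
    ring
  have hdiff : ∀ ω, (X ω - ∑ i, θ₁ i * Y i ω) - (X ω - ∑ i, θ₂ i * Y i ω)
      = ∑ i, (θ₂ - θ₁) i * Y i ω := fun ω => by
    simp only [Pi.sub_apply, sub_mul, Finset.sum_sub_distrib]
    ring
  have hpar := integral_sq_add_integral_sq (herr θ₁) (herr θ₂)
  simp only [hmid, hdiff] at hpar
  have hnonpos : ∫ ω, (∑ i, (θ₂ - θ₁) i * Y i ω) ^ 2 ∂μ ≤ 0 := by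
    linarith [h₁ θ₂, h₂ θ₁, h₁ fun i => (θ₁ i + θ₂ i) / 2]
  have hzero : (fun ω => (∑ i, (θ₂ - θ₁) i * Y i ω) ^ 2) =ᵐ[μ] 0 :=
    (integral_eq_zero_iff_of_nonneg (fun ω => sq_nonneg _)
      (memLp_sum_mul hY _).integrable_sq).mp
      (le_antisymm hnonpos (integral_nonneg fun ω => sq_nonneg _))
  have hpayoff : ∀ᵐ ω ∂μ, ∑ i, (θ₂ - θ₁) i * Y i ω = 0 := by
    filter_upwards [hzero] with ω hω
    exact pow_eq_zero_iff two_ne_zero |>.mp hω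
  exact (sub_eq_zero.mp (hNR _ hpayoff)).symm

end QuadraticHedge

theorem sum_add_ite_mul {ι : Type*} [Fintype ι] [DecidableEq ι] (β z : ι → ℝ) (k : ι) (c : ℝ) :
    ∑ i, (β + fun i => if i = k then c else 0) i * z i = ∑ i, β i * z i + c * z k := by
  simp [add_mul, Finset.sum_add_distrib, ite_mul]

theorem mean_quantile_valuation_translation_invariant_general
    {Ω : Type*} [MeasureSpace Ω]
    (n : ℕ) (Y : Fin (n + 1) → Ω → ℝ) (y : Fin (n + 1) → ℝ)
    (hY : ∀ i, MemLp (Y i) 2 volume)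
    (hNR : ∀ β : Fin (n + 1) → ℝ, (∀ᵐ ω, ∑ i, β i * Y i ω = 0) → β = 0)
    (r : ℝ) (hY0 : ∀ᵐ ω, Y 0 ω = Real.exp r) (hy0 : y 0 = 1)
    (α : ℝ)
    (coc : ℝ)
    (a : ℝ)
    (S : Ω → ℝ) (hS : MemLp S 2 volume)
    (θS θSa : Fin (n + 1) → ℝ)
    (hθS : ∀ β : Fin (n + 1) → ℝ,
      (∫ ω, (S ω - ∑ i, θS i * Y i ω) ^ 2) ≤ ∫ ω, (S ω - ∑ i, β i * Y i ω) ^ 2)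
    (hθSa : ∀ β : Fin (n + 1) → ℝ,
      (∫ ω, (S ω + a - ∑ i, θSa i * Y i ω) ^ 2)
        ≤ ∫ ω, (S ω + a - ∑ i, β i * Y i ω) ^ 2) :
    (θSa = θS + fun i => if i = 0 then a * Real.exp (-r) else 0) ∧
    (∀ᵐ ω, S ω + a - ∑ i, θSa i * Y i ω = S ω - ∑ i, θS i * Y i ω) ∧
    (∀ η : Fin (n + 1) → ℝ,
      (∀ β : Fin (n + 1) → ℝ,
        (∫ ω, KBLoss α (S ω - ∑ i, θS i * Y i ω - ∑ i, β i * Y i ω))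
          ≥ ∫ ω, KBLoss α (S ω - ∑ i, θS i * Y i ω - ∑ i, η i * Y i ω)) →
      (∑ i, θSa i * y i) + coc * ∑ i, η i * y i
        = ((∑ i, θS i * y i) + coc * ∑ i, η i * y i) + Real.exp (-r) * a) := by
  set d : Fin (n + 1) → ℝ := fun i => if i = 0 then a * Real.exp (-r) else 0
  have hshift : ∀ β, ∀ᵐ ω, ∑ i, (β + d) i * Y i ω = ∑ i, β i * Y i ω + a := fun β => by
    filter_upwards [hY0] with ω hω
    rw [sum_add_ite_mul, hω, mul_assoc, ← Real.exp_add, neg_add_cancel, Real.exp_zero, mul_one]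
  have hloss : ∀ β, ∫ ω, (S ω + a - ∑ i, (β + d) i * Y i ω) ^ 2
      = ∫ ω, (S ω - ∑ i, β i * Y i ω) ^ 2 := fun β =>
    integral_congr_ae <| by filter_upwards [hshift β] with ω hω; rw [hω]; ring
  have hθSa' : IsQuadraticHedge volume S Y (θSa - d) := fun β => by
    rw [← hloss, ← hloss, sub_add_cancel]
    exact hθSa _
  have hθ : θSa = θS + d := (sub_eq_iff_eq_add.mp (IsQuadraticHedge.unique hS hY hNR hθSa' hθS))
  refine ⟨hθ, ?_, fun η _ => ?_⟩
  · filter_upwards [hshift θS] with ω hω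
    rw [hθ, hω]
    ring
  · rw [hθ, sum_add_ite_mul, hy0]
    ring

/-- Translation invariance of the mean-quantile valuation. With non-redundant
square-integrable assets, `Y₀ = e^r` a.s. and `y₀ = 1`: the quadratic hedging strategies
satisfy `θ_{S+a} = θ_S + (a·e^{−r}, 0, …, 0)`, the residual of `S + a` equals the residual of
`S` a.s., and for any common residual quantile-hedging minimizer `η` the mean-quantile
valuation satisfies `ρ(S + a) = ρ(S) + e^{−r}·a`. -/
theorem mean_quantile_valuation_translation_invariant
    {Ω : Type*} [MeasureSpace Ω] [IsProbabilityMeasure (volume : Measure Ω)]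
    (n : ℕ) (Y : Fin (n + 1) → Ω → ℝ) (y : Fin (n + 1) → ℝ)
    (hY : ∀ i, MemLp (Y i) 2 volume)
    (hNR : ∀ β : Fin (n + 1) → ℝ, (∀ᵐ ω, ∑ i, β i * Y i ω = 0) → β = 0)
    (r : ℝ) (hr : 0 ≤ r) (hY0 : ∀ᵐ ω, Y 0 ω = Real.exp r) (hy0 : y 0 = 1)
    (α : ℝ) (hα : α ∈ Set.Ioo (0 : ℝ) 1)
    (coc : ℝ) (hcoc : coc ∈ Set.Ioo (0 : ℝ) 1)
    (a : ℝ)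
    (S : Ω → ℝ) (hS : MemLp S 2 volume)
    (θS θSa : Fin (n + 1) → ℝ)
    (hθS : ∀ β : Fin (n + 1) → ℝ,
      (∫ ω, (S ω - ∑ i, θS i * Y i ω) ^ 2) ≤ ∫ ω, (S ω - ∑ i, β i * Y i ω) ^ 2)
    (hθSa : ∀ β : Fin (n + 1) → ℝ,
      (∫ ω, (S ω + a - ∑ i, θSa i * Y i ω) ^ 2)
        ≤ ∫ ω, (S ω + a - ∑ i, β i * Y i ω) ^ 2) :
    (θSa = θS + fun i => if i = 0 then a * Real.exp (-r) else 0) ∧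
    (∀ᵐ ω, S ω + a - ∑ i, θSa i * Y i ω = S ω - ∑ i, θS i * Y i ω) ∧
    (∀ η : Fin (n + 1) → ℝ,
      (∀ β : Fin (n + 1) → ℝ,
        (∫ ω, KBLoss α (S ω - ∑ i, θS i * Y i ω - ∑ i, β i * Y i ω))
          ≥ ∫ ω, KBLoss α (S ω - ∑ i, θS i * Y i ω - ∑ i, η i * Y i ω)) →
      (∑ i, θSa i * y i) + coc * ∑ i, η i * y i
        = ((∑ i, θS i * y i) + coc * ∑ i, η i * y i) + Real.exp (-r) * a) :=
  mean_quantile_valuation_translation_invariant_general n Y y hY hNR r hY0 hy0 α coc a S hS θS θSa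
    hθS hθSa
end

section
/- Let X be an integrable random variable whose cumulative distribution function is continuous, and let α ∈ (0,1). Then, with q = VaR_α(X), one has TVaR_α(X) = q + (1/(1−α))·E[max(X − q, 0)], and the minimum over c ∈ ℝ of E[ℓ_α(X − c)] equals the TVaR deviation: min_{c ∈ ℝ} E[ℓ_α(X − c)] = TVaR_α(X) − E[X]. -/
open MeasureTheory

/-- Value-at-Risk at level `α`: `VaR_α(X) = inf {x ∈ ℝ : P(X ≤ x) ≥ α}`. -/
noncomputable def VaR {Ω : Type*} [MeasureSpace Ω] (X : Ω → ℝ) (α : ℝ) : ℝ :=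
  sInf {x : ℝ | α ≤ (volume {ω | X ω ≤ x}).toReal}

/-- Tail Value-at-Risk at level `α`: `TVaR_α(X) = (1/(1−α))·∫_α^1 VaR_u(X) du`. -/
noncomputable def TVaR {Ω : Type*} [MeasureSpace Ω] (X : Ω → ℝ) (α : ℝ) : ℝ :=
  (1 / (1 - α)) * ∫ u in α..1, VaR X u

/-!
For `u ∈ (α, 1)` one has `VaR_u > q + t` iff `F (q + t) < u`, where `F` is the cdf and
`q = VaR_α`. Hence, by the layer-cake formula, `∫_α^1 (VaR_u - q) du` and `E[(X - q)⁺]` are both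
`∫_0^∞ (1 - F (q + t)) dt`, which is the representation of `TVaR_α`.

Since `ℓ_α(y) = y⁺ / (1 - α) - y`, we get `E[ℓ_α(X - c)] = c + E[(X - c)⁺] / (1 - α) - E[X]`, and
this is minimal at `c = q` because `P(X > q) ≤ 1 - α ≤ P(X ≥ q)`: integrate
`(x - c)⁺ ≥ (x - q)⁺ + (q - c) 𝟙_A(x)` with `A = {x ≥ q}` or `A = {x > q}`, according to the sign
of `q - c`.
-/

open Set Filter Topology ProbabilityTheory

namespace ProbabilityTheory

-- Meaningful only for `u ∈ (0, 1)`: e.g. for `u ≤ 0` the set is unbounded below and `sInf` is `0`.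
noncomputable def quantile (μ : Measure ℝ) (u : ℝ) : ℝ := sInf {x | u ≤ cdf μ x}

section Quantile

variable {μ : Measure ℝ} {u : ℝ}

lemma bddBelow_setOf_le_cdf (hu : 0 < u) : BddBelow {x | u ≤ cdf μ x} := by
  obtain ⟨b, hb⟩ := ((tendsto_cdf_atBot μ).eventually (eventually_lt_nhds hu)).exists
  exact ⟨b, fun x hx => ((monotone_cdf μ).reflect_lt (hb.trans_le hx)).le⟩

lemma nonempty_setOf_le_cdf (hu : u < 1) : {x | u ≤ cdf μ x}.Nonempty :=
  ((tendsto_cdf_atTop μ).eventually (eventually_ge_nhds hu)).exists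

lemma le_cdf_quantile (hu : u ∈ Ioo 0 1) : u ≤ cdf μ (quantile μ u) := by
  have hright : Tendsto (cdf μ) (𝓝[>] quantile μ u) (𝓝 (cdf μ (quantile μ u))) :=
    ((cdf μ).right_continuous _).mono Ioi_subset_Ici_self
  refine ge_of_tendsto hright (eventually_nhdsWithin_of_forall fun x hx => ?_)
  obtain ⟨y, hy, hyx⟩ := exists_lt_of_csInf_lt (nonempty_setOf_le_cdf hu.2) hx
  exact hy.trans (monotone_cdf μ hyx.le)

lemma lt_quantile_iff (hu : u ∈ Ioo 0 1) {t : ℝ} : t < quantile μ u ↔ cdf μ t < u := by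
  constructor
  · intro ht
    by_contra! h
    exact (csInf_le (bddBelow_setOf_le_cdf hu.1) h).not_gt ht
  · intro ht
    by_contra! h
    exact ((le_cdf_quantile hu).trans (monotone_cdf μ h)).not_gt ht

lemma leftLim_cdf_quantile_le (hu : u ∈ Ioo 0 1) :
    Function.leftLim (cdf μ) (quantile μ u) ≤ u :=
  le_of_tendsto ((monotone_cdf μ).tendsto_leftLim _)
    (eventually_nhdsWithin_of_forall fun _ ht => ((lt_quantile_iff hu).1 ht).le)

lemma monotoneOn_quantile : MonotoneOn (quantile μ) (Ioo 0 1) := fun _ hu _ hv huv =>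
  csInf_le_csInf (bddBelow_setOf_le_cdf hu.1) (nonempty_setOf_le_cdf hv.2)
    fun _ hx => huv.trans hx

lemma aemeasurable_quantile_restrict_Ioo {α : ℝ} (hα : 0 ≤ α) :
    AEMeasurable (quantile μ) (volume.restrict (Ioo α 1)) :=
  aemeasurable_restrict_of_monotoneOn measurableSet_Ioo
    (monotoneOn_quantile.mono (Ioo_subset_Ioo_left hα))

lemma ae_restrict_Ioo_quantile_sub_nonneg {α : ℝ} (hα : α ∈ Ioo 0 1) :
    0 ≤ᵐ[volume.restrict (Ioo α 1)] fun u => quantile μ u - quantile μ α :=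
  (ae_restrict_iff' measurableSet_Ioo).2 (.of_forall fun _ hu =>
    sub_nonneg.2 (monotoneOn_quantile hα (Ioo_subset_Ioo_left hα.1.le hu) hu.1.le))

end Quantile

lemma integral_posPart_sub_add_le {μ : Measure ℝ} [IsFiniteMeasure μ]
    (hμ : Integrable (fun x => x) μ)
    {A : Set ℝ} (hA : MeasurableSet A) {q : ℝ} (hqA : Ioi q ⊆ A) (hAq : A ⊆ Ici q) (c : ℝ) :
    ∫ x, max (x - q) 0 ∂μ + (q - c) * μ.real A ≤ ∫ x, max (x - c) 0 ∂μ := by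
  have hpointwise : ∀ x, max (x - q) 0 + A.indicator (fun _ => q - c) x ≤ max (x - c) 0 := by
    intro x
    by_cases hx : x ∈ A
    · rw [indicator_of_mem hx, max_eq_left (sub_nonneg.2 (hAq hx))]
      linarith [le_max_left (x - c) 0]
    · rw [indicator_of_notMem hx, max_eq_right (sub_nonpos.2 (not_lt.1 fun h => hx (hqA h)))]
      simp
  have hposPart : ∀ p, Integrable (fun x => max (x - p) 0) μ := fun p =>
    (hμ.sub (integrable_const p)).pos_part
  have hindicator : Integrable (A.indicator fun _ => q - c) μ :=
    (integrable_const (q - c)).indicator hA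
  calc ∫ x, max (x - q) 0 ∂μ + (q - c) * μ.real A
      = ∫ x, (max (x - q) 0 + A.indicator (fun _ => q - c) x) ∂μ := by
        rw [integral_add (hposPart q) hindicator, integral_indicator_const _ hA, smul_eq_mul,
          mul_comm]
    _ ≤ ∫ x, max (x - c) 0 ∂μ :=
        integral_mono ((hposPart q).add hindicator) (hposPart c) hpointwise

section ProbabilityMeasure

variable {μ : Measure ℝ} [IsProbabilityMeasure μ]

lemma measure_Ioi_eq_ofReal_one_sub_cdf (x : ℝ) :
    μ (Ioi x) = ENNReal.ofReal (1 - cdf μ x) := by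
  conv_lhs => rw [← measure_cdf μ]
  exact (cdf μ).measure_Ioi (tendsto_cdf_atTop μ) x

lemma measureReal_Ioi_quantile_le {u : ℝ} (hu : u ∈ Ioo 0 1) :
    μ.real (Ioi (quantile μ u)) ≤ 1 - u := by
  rw [measureReal_def, measure_Ioi_eq_ofReal_one_sub_cdf,
    ENNReal.toReal_ofReal (sub_nonneg.2 (cdf_le_one μ _))]
  linarith [le_cdf_quantile (μ := μ) hu]

lemma one_sub_le_measureReal_Ici_quantile {u : ℝ} (hu : u ∈ Ioo 0 1) :
    1 - u ≤ μ.real (Ici (quantile μ u)) := by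
  have hIci := (cdf μ).measure_Ici (tendsto_cdf_atTop μ) (quantile μ u)
  rw [measure_cdf] at hIci
  rw [measureReal_def, hIci, ENNReal.toReal_ofReal]
  · linarith [leftLim_cdf_quantile_le (μ := μ) hu]
  · exact sub_nonneg.2 ((monotone_cdf μ).leftLim_le le_rfl |>.trans (cdf_le_one μ _))

lemma setLIntegral_quantile_sub {α : ℝ} (hα : α ∈ Ioo 0 1) :
    ∫⁻ u in Ioo α 1, ENNReal.ofReal (quantile μ u - quantile μ α) =
      ∫⁻ x, ENNReal.ofReal (max (x - quantile μ α) 0) ∂μ := by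
  set q := quantile μ α
  rw [lintegral_eq_lintegral_meas_lt _ (ae_restrict_Ioo_quantile_sub_nonneg hα)
      ((aemeasurable_quantile_restrict_Ioo hα.1.le).sub_const q),
    lintegral_eq_lintegral_meas_lt _ (.of_forall fun x => le_max_right (x - q) 0)
      ((measurable_id.sub_const q).max measurable_const).aemeasurable]
  refine setLIntegral_congr_fun measurableSet_Ioi fun t ht => ?_
  -- the superlevel sets on both sides have measure `1 - F (q + t)`
  have hsub : {u | t < quantile μ u - q} ∩ Ioo α 1 = Ioo (cdf μ (q + t)) 1 := by
    ext u
    simp only [mem_inter_iff, mem_ofPred_eq, mem_Ioo, lt_sub_iff_add_lt']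
    constructor
    · rintro ⟨hqt, hαu, hu1⟩
      exact ⟨(lt_quantile_iff ⟨hα.1.trans hαu, hu1⟩).1 hqt, hu1⟩
    · rintro ⟨hFu, hu1⟩
      have hαu : α < u := (le_cdf_quantile hα).trans_lt
        ((monotone_cdf μ (le_add_of_nonneg_right (le_of_lt ht))).trans_lt hFu)
      exact ⟨(lt_quantile_iff ⟨hα.1.trans hαu, hu1⟩).2 hFu, hαu, hu1⟩
  rw [Measure.restrict_apply' measurableSet_Ioo, hsub, Real.volume_Ioo,
    ← measure_Ioi_eq_ofReal_one_sub_cdf]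
  congr 1
  ext x
  simp only [mem_ofPred_eq, mem_Ioi, lt_max_iff, ht.out.not_gt, or_false]
  constructor <;> intro h <;> linarith

lemma intervalIntegral_quantile (hμ : Integrable (fun x => x) μ)
    {α : ℝ} (hα : α ∈ Ioo 0 1) :
    ∫ u in α..1, quantile μ u = (1 - α) * quantile μ α + ∫ x, max (x - quantile μ α) 0 ∂μ := by
  set q := quantile μ α
  have hmeas : AEStronglyMeasurable (fun u => quantile μ u - q) (volume.restrict (Ioo α 1)) :=
    ((aemeasurable_quantile_restrict_Ioo hα.1.le).sub_const q).aestronglyMeasurable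
  have hnonneg := ae_restrict_Ioo_quantile_sub_nonneg (μ := μ) hα
  have hposPart : Integrable (fun x => max (x - q) 0) μ := (hμ.sub (integrable_const q)).pos_part
  have hint : Integrable (fun u => quantile μ u - q) (volume.restrict (Ioo α 1)) :=
    ⟨hmeas, (hasFiniteIntegral_iff_ofReal hnonneg).2
      ((setLIntegral_quantile_sub (μ := μ) hα).symm ▸ hposPart.lintegral_lt_top)⟩
  have hint_sub : ∫ u in Ioo α 1, (quantile μ u - q) = ∫ x, max (x - q) 0 ∂μ := by
    rw [integral_eq_lintegral_of_nonneg_ae hnonneg hmeas,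
      integral_eq_lintegral_of_nonneg_ae (.of_forall fun x => le_max_right (x - q) 0)
        hposPart.aestronglyMeasurable, setLIntegral_quantile_sub hα]
  calc ∫ u in α..1, quantile μ u
      = ∫ u in Ioo α 1, ((quantile μ u - q) + q) := by
        rw [intervalIntegral.integral_of_le hα.2.le, integral_Ioc_eq_integral_Ioo]
        simp_rw [sub_add_cancel]
    _ = (1 - α) * q + ∫ x, max (x - q) 0 ∂μ := by
        rw [integral_add hint (integrable_const q), hint_sub, setIntegral_const,
          Real.volume_real_Ioo_of_le hα.2.le, smul_eq_mul, add_comm]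

lemma quantile_add_integral_posPart_le (hμ : Integrable (fun x => x) μ)
    {α : ℝ} (hα : α ∈ Ioo 0 1) (c : ℝ) :
    quantile μ α + (1 - α)⁻¹ * ∫ x, max (x - quantile μ α) 0 ∂μ ≤
      c + (1 - α)⁻¹ * ∫ x, max (x - c) 0 ∂μ := by
  set q := quantile μ α
  have h1α : 0 < 1 - α := sub_pos.2 hα.2
  refine le_of_mul_le_mul_left ?_ h1α
  rw [mul_add, mul_add, mul_inv_cancel_left₀ h1α.ne', mul_inv_cancel_left₀ h1α.ne']
  rcases le_total c q with hcq | hqc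
  · have hIci := integral_posPart_sub_add_le hμ measurableSet_Ici
      (Ioi_subset_Ici_self (a := q)) subset_rfl c
    nlinarith [one_sub_le_measureReal_Ici_quantile (μ := μ) hα]
  · have hIoi := integral_posPart_sub_add_le hμ measurableSet_Ioi subset_rfl
      (Ioi_subset_Ici_self (a := q)) c
    nlinarith [measureReal_Ioi_quantile_le (μ := μ) hα]

end ProbabilityMeasure

end ProbabilityTheory

lemma KBLoss_eq {α : ℝ} (hα : α ≠ 1) (x : ℝ) : KBLoss α x = (1 - α)⁻¹ * max x 0 - x := by
  have h1α : 1 - α ≠ 0 := sub_ne_zero.2 hα.symm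
  rw [KBLoss]
  rcases le_total 0 x with hx | hx
  · rw [max_eq_left hx, max_eq_right (neg_nonpos.2 hx)]
    field_simp
    ring
  · rw [max_eq_right hx, max_eq_left (neg_nonneg.2 hx)]
    ring

lemma integral_KBLoss_sub {Ω : Type*} [MeasurableSpace Ω] {P : Measure Ω}
    [IsProbabilityMeasure P] {X : Ω → ℝ} (hX : Integrable X P) {α : ℝ} (hα : α ≠ 1) (c : ℝ) :
    ∫ ω, KBLoss α (X ω - c) ∂P = c + (1 - α)⁻¹ * ∫ ω, max (X ω - c) 0 ∂P - ∫ ω, X ω ∂P := by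
  have hsub : Integrable (fun ω => X ω - c) P := hX.sub (integrable_const c)
  simp_rw [KBLoss_eq hα]
  rw [integral_sub (hsub.pos_part.const_mul _) hsub, integral_const_mul,
    integral_sub hX (integrable_const c), integral_const, probReal_univ, one_smul]
  ring

lemma VaR_eq_quantile_map {Ω : Type*} [MeasureSpace Ω]
    [IsProbabilityMeasure (volume : Measure Ω)] {X : Ω → ℝ} (hX : AEMeasurable X) :
    VaR X = quantile (volume.map X) := by
  have : IsProbabilityMeasure (volume.map X) := Measure.isProbabilityMeasure_map hX
  funext u
  simp only [VaR, quantile, cdf_eq_real, measureReal_def,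
    Measure.map_apply_of_aemeasurable hX measurableSet_Iic]
  rfl

theorem TVaR_representation_and_KB_min_general
    {Ω : Type*} [MeasureSpace Ω] [IsProbabilityMeasure (volume : Measure Ω)]
    (X : Ω → ℝ) (hX : Integrable X volume)
    (α : ℝ) (hα : α ∈ Set.Ioo (0 : ℝ) 1) :
    TVaR X α = VaR X α + (1 / (1 - α)) * ∫ ω, max (X ω - VaR X α) 0 ∧
    IsLeast {v : ℝ | ∃ c : ℝ, v = ∫ ω, KBLoss α (X ω - c)}
      (TVaR X α - ∫ ω, X ω) := by
  have hXm := hX.aemeasurable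
  have : IsProbabilityMeasure (volume.map X) := Measure.isProbabilityMeasure_map hXm
  have hid : Integrable (fun x => x) (volume.map X) :=
    (integrable_map_measure aestronglyMeasurable_id hXm).2 hX
  have hposPart (c : ℝ) : ∫ ω, max (X ω - c) 0 = ∫ x, max (x - c) 0 ∂(volume.map X) :=
    (integral_map (f := fun x => max (x - c) 0) hXm (by fun_prop)).symm
  have hTVaR : TVaR X α = VaR X α + (1 / (1 - α)) * ∫ ω, max (X ω - VaR X α) 0 := by
    rw [TVaR, VaR_eq_quantile_map hXm, intervalIntegral_quantile hid hα, hposPart]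
    field_simp [(sub_pos.2 hα.2).ne']
  refine ⟨hTVaR, ⟨VaR X α, ?_⟩, ?_⟩
  · rw [integral_KBLoss_sub hX hα.2.ne, hTVaR, one_div]
  · rintro _ ⟨c, rfl⟩
    rw [integral_KBLoss_sub hX hα.2.ne, hTVaR, one_div, VaR_eq_quantile_map hXm, hposPart,
      hposPart]
    linarith [quantile_add_integral_posPart_le hid hα c]

/-- For an integrable `X` with continuous cdf and `α ∈ (0,1)`, writing
`q = VaR_α(X)`, one has `TVaR_α(X) = q + (1/(1−α))·E[max(X − q, 0)]`, and the minimum of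
`c ↦ E[ℓ_α(X − c)]` over `c ∈ ℝ` is attained and equals `TVaR_α(X) − E[X]`. -/
theorem TVaR_representation_and_KB_min
    {Ω : Type*} [MeasureSpace Ω] [IsProbabilityMeasure (volume : Measure Ω)]
    (X : Ω → ℝ) (hX : Integrable X volume)
    (hcdf : Continuous fun x : ℝ => (volume {ω | X ω ≤ x}).toReal)
    (α : ℝ) (hα : α ∈ Set.Ioo (0 : ℝ) 1) :
    TVaR X α = VaR X α + (1 / (1 - α)) * ∫ ω, max (X ω - VaR X α) 0 ∧
    IsLeast {v : ℝ | ∃ c : ℝ, v = ∫ ω, KBLoss α (X ω - c)}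
      (TVaR X α - ∫ ω, X ω) :=
  TVaR_representation_and_KB_min_general X hX α hα
end
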